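/- arXiv:1507.04871 — 4 statements merged into one kernel-verified Lean document; each statement's English description precedes it below -/
import Mathlib

section
/- Let 𝔤 be a finite-dimensional real Lie algebra, let V₁ ⊆ 𝔤 be a linear subspace and S ⊆ V₁ a linear subspace. Let π : 𝔤 → 𝔤/V₁ be the quotient map of vector spaces and let Φ : V₁ → Hom_ℝ(S, 𝔤/V₁) be the linear map defined by Φ(ξ)(X) = π(⁅ξ, X⁆). If Φ is surjective and Φ(ξ) = 0 for every ξ ∈ S, then dim V₁ − dim S ≥ (dim S) · (dim 𝔤 − dim V₁). -/
/-! Rank–nullity for `Φ`: its image is all of `Hom(S, 𝔤/V₁)`, of dimension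
`dim S · (dim 𝔤 − dim V₁)`, and its kernel contains `S`. -/

open Module

theorem LinearMap.finrank_add_finrank_le_of_surjective_of_le_ker {K V W : Type*} [DivisionRing K]
    [AddCommGroup V] [Module K V] [AddCommGroup W] [Module K W] [FiniteDimensional K V]
    (f : V →ₗ[K] W) (hf : Function.Surjective f) {U : Submodule K V} (hU : U ≤ LinearMap.ker f) :
    finrank K W + finrank K U ≤ finrank K V := by
  rw [← f.finrank_range_add_finrank_ker, LinearMap.range_eq_top.mpr hf, finrank_top]
  exact Nat.add_le_add_left (Submodule.finrank_mono hU) _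

theorem Submodule.finrank_comap_subtype_of_le {K V : Type*} [DivisionRing K] [AddCommGroup V]
    [Module K V] {S T : Submodule K V} (h : S ≤ T) :
    finrank K (S.comap T.subtype) = finrank K S :=
  (Submodule.comapSubtypeEquivOfLe h).finrank_eq

theorem gromov_dimension_condition_general
    (𝔤 : Type*) [LieRing 𝔤] [LieAlgebra ℝ 𝔤] [FiniteDimensional ℝ 𝔤]
    (V₁ S : Submodule ℝ 𝔤) (hS : S ≤ V₁)
    (Φ : V₁ →ₗ[ℝ] (S →ₗ[ℝ] 𝔤 ⧸ V₁))
    (hsurj : Function.Surjective Φ)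
    (hiso : ∀ ξ : V₁, (ξ : 𝔤) ∈ S → Φ ξ = 0) :
    (Module.finrank ℝ S : ℤ) * ((Module.finrank ℝ 𝔤 : ℤ) - (Module.finrank ℝ V₁ : ℤ))
      ≤ (Module.finrank ℝ V₁ : ℤ) - (Module.finrank ℝ S : ℤ) := by
  have hcount := Φ.finrank_add_finrank_le_of_surjective_of_le_ker hsurj
    (U := S.comap V₁.subtype) fun ξ hξ ↦ hiso ξ hξ
  rw [finrank_linearMap, Submodule.finrank_comap_subtype_of_le hS] at hcount
  have hquot := Submodule.finrank_quotient_add_finrank V₁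
  have hdim : (finrank ℝ (𝔤 ⧸ V₁) : ℤ) = finrank ℝ 𝔤 - finrank ℝ V₁ := by omega
  rw [← hdim]
  linarith [(by exact_mod_cast hcount :
    (finrank ℝ S * finrank ℝ (𝔤 ⧸ V₁) + finrank ℝ S : ℤ) ≤ finrank ℝ V₁)]

/-- Gromov's necessary dimension condition for the existence of an Ω-regular,
Ω-isotropic subspace `S` of `V₁`: if the linear map
`Φ : V₁ → Hom_ℝ(S, 𝔤/V₁)`, `Φ(ξ)(X) = π ⁅ξ, X⁆`, is surjective and vanishes on `S`,
then `dim V₁ − dim S ≥ dim S · (dim 𝔤 − dim V₁)`. -/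
theorem gromov_dimension_condition
    (𝔤 : Type*) [LieRing 𝔤] [LieAlgebra ℝ 𝔤] [FiniteDimensional ℝ 𝔤]
    (V₁ S : Submodule ℝ 𝔤) (hS : S ≤ V₁)
    (Φ : V₁ →ₗ[ℝ] (S →ₗ[ℝ] 𝔤 ⧸ V₁))
    (hΦ : ∀ (ξ : V₁) (X : S), Φ ξ X = Submodule.mkQ V₁ ⁅(ξ : 𝔤), (X : 𝔤)⁆)
    (hsurj : Function.Surjective Φ)
    (hiso : ∀ ξ : V₁, (ξ : 𝔤) ∈ S → Φ ξ = 0) :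
    (Module.finrank ℝ S : ℤ) * ((Module.finrank ℝ 𝔤 : ℤ) - (Module.finrank ℝ V₁ : ℤ))
      ≤ (Module.finrank ℝ V₁ : ℤ) - (Module.finrank ℝ S : ℤ) :=
  gromov_dimension_condition_general 𝔤 V₁ S hS Φ hsurj hiso
end

section
/- Let 𝔤 be a finite-dimensional 2-step nilpotent Lie algebra over ℝ (⁅⁅x, y⁆, z⁆ = 0), and let B₁, B₂ be finite subsets of 𝔤 such that B₁ ∪ B₂ is an ℝ-basis of 𝔤, the ℝ-linear span of B₂ equals the derived subalgebra ⁅𝔤, 𝔤⁆, and (1/2)⁅a, b⁆ lies in the ℤ-span of B₂ for all a, b ∈ B₁. Then the ℤ-span 𝒵 of B₁ ∪ B₂ is a subgroup of the group (𝔤, *) with x * y = x + y + (1/2)⁅x, y⁆: it contains 0, is closed under *, and is closed under the inverse x ↦ −x. -/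
/-! In a 2-step nilpotent Lie algebra every bracket is central, so on the ℤ-span of `B₁ ∪ B₂`
the half-bracket `(x, y) ↦ (1/2)⁅x, y⁆` is a ℤ-bilinear map killing `B₂` in either slot.
It therefore takes values in the ℤ-span of its values on `B₁ × B₁`, which lies in the ℤ-span
of `B₂` by hypothesis; hence `x * y = x + y + (1/2)⁅x, y⁆` stays in the lattice. -/

theorem lie_eq_zero_of_mem_span_lie {R L : Type*} [CommRing R] [LieRing L] [LieAlgebra R L]
    (h2 : ∀ x y z : L, ⁅⁅x, y⁆, z⁆ = 0) {b : L}
    (hb : b ∈ Submodule.span R {z : L | ∃ x y : L, ⁅x, y⁆ = z}) (z : L) : ⁅b, z⁆ = 0 := by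
  induction hb using Submodule.span_induction with
  | mem w hw => obtain ⟨x, y, rfl⟩ := hw; exact h2 x y z
  | zero => exact zero_lie z
  | add u v _ _ hu hv => rw [add_lie, hu, hv, add_zero]
  | smul t u _ hu => rw [smul_lie, hu, smul_zero]

theorem smul_lie_mem_of_mem_span_union {R L : Type*} [CommRing R] [LieRing L]
    [LieAlgebra R L] (c : R) {S₁ S₂ : Set L} {N : Submodule ℤ L}
    (hcentral : ∀ b ∈ S₂, ∀ z : L, ⁅b, z⁆ = 0) (hS₁ : ∀ a ∈ S₁, ∀ b ∈ S₁, c • ⁅a, b⁆ ∈ N)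
    {x y : L} (hx : x ∈ Submodule.span ℤ (S₁ ∪ S₂)) (hy : y ∈ Submodule.span ℤ (S₁ ∪ S₂)) :
    c • ⁅x, y⁆ ∈ N := by
  induction hx, hy using Submodule.span_induction₂ with
  | mem_mem a b ha hb =>
    rcases ha with ha | ha
    · rcases hb with hb | hb
      · exact hS₁ a ha b hb
      · rw [← lie_skew, hcentral b hb a, neg_zero, smul_zero]
        exact N.zero_mem
    · rw [hcentral a ha b, smul_zero]
      exact N.zero_mem
  | zero_left => rw [zero_lie, smul_zero]; exact N.zero_mem
  | zero_right => rw [lie_zero, smul_zero]; exact N.zero_mem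
  | add_left _ _ _ _ _ _ hu hv => rw [add_lie, smul_add]; exact N.add_mem hu hv
  | add_right _ _ _ _ _ _ hu hv => rw [lie_add, smul_add]; exact N.add_mem hu hv
  | smul_left n _ _ _ _ h => rw [zsmul_lie, smul_comm]; exact N.smul_mem n h
  | smul_right n _ _ _ _ h => rw [lie_zsmul, smul_comm]; exact N.smul_mem n h

theorem zspan_is_subgroup_of_bch_group_general
    (𝔤 : Type*) [LieRing 𝔤] [LieAlgebra ℝ 𝔤]
    (h2 : ∀ x y z : 𝔤, ⁅⁅x, y⁆, z⁆ = 0)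
    (B₁ B₂ : Finset 𝔤)
    (hB₂ : Submodule.span ℝ (B₂ : Set 𝔤)
      = Submodule.span ℝ {z : 𝔤 | ∃ x y : 𝔤, ⁅x, y⁆ = z})
    (hhalf : ∀ a ∈ B₁, ∀ b ∈ B₁,
      (1 / 2 : ℝ) • ⁅a, b⁆ ∈ Submodule.span ℤ (B₂ : Set 𝔤))
    (m : 𝔤 → 𝔤 → 𝔤)
    (hm : ∀ x y : 𝔤, m x y = x + y + (1 / 2 : ℝ) • ⁅x, y⁆) :
    (0 : 𝔤) ∈ Submodule.span ℤ ((B₁ : Set 𝔤) ∪ (B₂ : Set 𝔤)) ∧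
    (∀ x ∈ Submodule.span ℤ ((B₁ : Set 𝔤) ∪ (B₂ : Set 𝔤)),
      ∀ y ∈ Submodule.span ℤ ((B₁ : Set 𝔤) ∪ (B₂ : Set 𝔤)),
        m x y ∈ Submodule.span ℤ ((B₁ : Set 𝔤) ∪ (B₂ : Set 𝔤))) ∧
    (∀ x ∈ Submodule.span ℤ ((B₁ : Set 𝔤) ∪ (B₂ : Set 𝔤)),
      -x ∈ Submodule.span ℤ ((B₁ : Set 𝔤) ∪ (B₂ : Set 𝔤))) := by
  have hcentral : ∀ b ∈ (B₂ : Set 𝔤), ∀ z : 𝔤, ⁅b, z⁆ = 0 := fun b hb =>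
    lie_eq_zero_of_mem_span_lie (R := ℝ) h2 (hB₂ ▸ Submodule.subset_span hb)
  have hB₂_le : Submodule.span ℤ (B₂ : Set 𝔤) ≤ Submodule.span ℤ ((B₁ : Set 𝔤) ∪ B₂) :=
    Submodule.span_mono Set.subset_union_right
  refine ⟨zero_mem _, fun x hx y hy => ?_, fun x hx => neg_mem hx⟩
  rw [hm]
  exact add_mem (add_mem hx hy)
    (hB₂_le (smul_lie_mem_of_mem_span_union _ hcentral hhalf hx hy))

/-- If `B₁ ∪ B₂` is an ℝ-basis of a finite-dimensional 2-step nilpotent real Lie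
algebra `𝔤`, the ℝ-span of `B₂` is the derived subalgebra, and `(1/2)⁅a, b⁆` lies
in the ℤ-span of `B₂` for all `a, b ∈ B₁`, then the ℤ-span `𝒵` of `B₁ ∪ B₂` is a
subgroup of the BCH group `(𝔤, *)`: it contains `0`, is closed under
`x * y = x + y + (1/2)⁅x, y⁆`, and is closed under `x ↦ −x`. -/
theorem zspan_is_subgroup_of_bch_group
    (𝔤 : Type*) [LieRing 𝔤] [LieAlgebra ℝ 𝔤] [FiniteDimensional ℝ 𝔤]
    (h2 : ∀ x y z : 𝔤, ⁅⁅x, y⁆, z⁆ = 0)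
    (B₁ B₂ : Finset 𝔤)
    (hli : LinearIndependent ℝ (Subtype.val : (((B₁ : Set 𝔤) ∪ (B₂ : Set 𝔤) : Set 𝔤)) → 𝔤))
    (hspan : Submodule.span ℝ ((B₁ : Set 𝔤) ∪ (B₂ : Set 𝔤)) = ⊤)
    (hB₂ : Submodule.span ℝ (B₂ : Set 𝔤)
      = Submodule.span ℝ {z : 𝔤 | ∃ x y : 𝔤, ⁅x, y⁆ = z})
    (hhalf : ∀ a ∈ B₁, ∀ b ∈ B₁,
      (1 / 2 : ℝ) • ⁅a, b⁆ ∈ Submodule.span ℤ (B₂ : Set 𝔤))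
    (m : 𝔤 → 𝔤 → 𝔤)
    (hm : ∀ x y : 𝔤, m x y = x + y + (1 / 2 : ℝ) • ⁅x, y⁆) :
    (0 : 𝔤) ∈ Submodule.span ℤ ((B₁ : Set 𝔤) ∪ (B₂ : Set 𝔤)) ∧
    (∀ x ∈ Submodule.span ℤ ((B₁ : Set 𝔤) ∪ (B₂ : Set 𝔤)),
      ∀ y ∈ Submodule.span ℤ ((B₁ : Set 𝔤) ∪ (B₂ : Set 𝔤)),
        m x y ∈ Submodule.span ℤ ((B₁ : Set 𝔤) ∪ (B₂ : Set 𝔤))) ∧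
    (∀ x ∈ Submodule.span ℤ ((B₁ : Set 𝔤) ∪ (B₂ : Set 𝔤)),
      -x ∈ Submodule.span ℤ ((B₁ : Set 𝔤) ∪ (B₂ : Set 𝔤))) :=
  zspan_is_subgroup_of_bch_group_general 𝔤 h2 B₁ B₂ hB₂ hhalf m hm
end

section
/- Let ℍ be the real quaternions, im(q) = q − re(q), Im ℍ = {q ∈ ℍ : re(q) = 0}, and define ω : ℍⁿ × ℍⁿ → Im ℍ by ω(z, w) = Σᵢ im(zᵢ · conj(wᵢ)). Let S = ℝⁿ ⊆ ℍⁿ be the subspace of vectors whose coordinates are real quaternions. Then: (i) ω(z, w) = 0 for all z, w ∈ S (S is Ω-isotropic), and (ii) for every ℝ-linear map φ : S → Im ℍ there exists ξ ∈ ℍⁿ such that ω(ξ, s) = φ(s) for all s ∈ S (S is Ω-regular). In particular the first layer V₁ = ℍⁿ of the quaternionic Heisenberg Lie algebra 𝔥ⁿ_ℍ contains an n-dimensional Ω-regular, Ω-isotropic subspace. -/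
/-- The purely imaginary quaternions `Im ℍ = {q : ℍ | re q = 0}`, as an ℝ-subspace
of the quaternions. -/
def imH : Submodule ℝ (Quaternion ℝ) where
  carrier := {q | q.re = 0}
  add_mem' := by
    intro a b ha hb
    simp only [Set.mem_setOf_eq] at *
    simp [ha, hb]
  zero_mem' := by simp [Quaternion.re_zero]
  smul_mem' := by
    intro c q hq
    simp only [Set.mem_setOf_eq] at *
    simp [Quaternion.re_smul, hq]

/-- The curvature form `ω(z, w) = Σᵢ im(zᵢ · conj(wᵢ))` of the quaternionic
Heisenberg Lie algebra. -/
noncomputable def omegaH (n : ℕ) (z w : Fin n → Quaternion ℝ) : Quaternion ℝ :=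
  ∑ i, Quaternion.im (z i * star (w i))

/-- The subspace `S = ℝⁿ ⊆ ℍⁿ` of vectors all of whose coordinates are real
quaternions. -/
def realVectors (n : ℕ) : Submodule ℝ (Fin n → Quaternion ℝ) where
  carrier := {z | ∀ i, Quaternion.im (z i) = 0}
  add_mem' := by
    intro a b ha hb i
    simp [Quaternion.im_add, ha i, hb i]
  zero_mem' := by intro i; simp [Quaternion.im_zero]
  smul_mem' := by
    intro c z hz i
    simp [Quaternion.im_smul, hz i]

/-! For a real vector `s`, `ω(ξ, s) = Σᵢ sᵢ · im ξᵢ`. This vanishes when `ξ` is real as well, and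
it equals `φ(s)` when `ξᵢ := φ(eᵢ)`, because `φ(eᵢ)` is imaginary and `φ` is linear. -/

namespace Quaternion

variable {R : Type*} [CommRing R]

theorem eq_coe_re_of_im_eq_zero {q : ℍ[R]} (h : q.im = 0) : q = q.re := by
  simpa [h] using (re_add_im q).symm

theorem im_eq_self_of_re_eq_zero {q : ℍ[R]} (h : q.re = 0) : q.im = q := by
  simpa [h] using re_add_im q

theorem im_mul_star_of_im_eq_zero (q : ℍ[R]) {p : ℍ[R]} (hp : p.im = 0) :
    (q * star p).im = p.re • q.im := by
  conv_lhs => rw [eq_coe_re_of_im_eq_zero hp, star_coe, mul_coe_eq_smul, im_smul]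

end Quaternion

open Quaternion

theorem omegaH_of_mem_realVectors {n : ℕ} (ξ : Fin n → ℍ[ℝ]) {s : Fin n → ℍ[ℝ]}
    (hs : s ∈ realVectors n) : omegaH n ξ s = ∑ i, (s i).re • (ξ i).im :=
  Finset.sum_congr rfl fun i _ => im_mul_star_of_im_eq_zero _ (hs i)

theorem omegaH_eq_zero_of_mem_realVectors {n : ℕ} {z w : Fin n → ℍ[ℝ]}
    (hz : z ∈ realVectors n) (hw : w ∈ realVectors n) : omegaH n z w = 0 := by
  simp [omegaH_of_mem_realVectors z hw, hz _]

noncomputable def realVectorsEquiv (n : ℕ) : realVectors n ≃ₗ[ℝ] (Fin n → ℝ) where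
  toFun s i := (s.1 i).re
  map_add' _ _ := rfl
  map_smul' _ _ := rfl
  invFun r := ⟨fun i => r i, fun _ => im_coe _⟩
  left_inv s := Subtype.ext <| funext fun i => (eq_coe_re_of_im_eq_zero (s.2 i)).symm
  right_inv _ := rfl

theorem finrank_realVectors (n : ℕ) : Module.finrank ℝ (realVectors n) = n := by
  simp [(realVectorsEquiv n).finrank_eq]

noncomputable def regularWitness {n : ℕ} (φ : realVectors n →ₗ[ℝ] imH) (i : Fin n) : ℍ[ℝ] :=
  φ ((realVectorsEquiv n).symm fun j => if i = j then 1 else 0)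

theorem linearMap_realVectors_apply {n : ℕ} (φ : realVectors n →ₗ[ℝ] imH) (s : realVectors n) :
    (φ s : ℍ[ℝ]) = ∑ i, (s.1 i).re • regularWitness φ i := by
  have h := (φ ∘ₗ (realVectorsEquiv n).symm.toLinearMap).pi_apply_eq_sum_univ
    (realVectorsEquiv n s)
  simp only [LinearMap.comp_apply, LinearEquiv.coe_coe, LinearEquiv.symm_apply_apply] at h
  simp only [h, Submodule.coe_sum, Submodule.coe_smul]
  rfl

theorem omegaH_regularWitness {n : ℕ} (φ : realVectors n →ₗ[ℝ] imH) (s : realVectors n) :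
    omegaH n (regularWitness φ) s = φ s := by
  rw [omegaH_of_mem_realVectors _ s.2, linearMap_realVectors_apply]
  congr! with i
  exact im_eq_self_of_re_eq_zero (φ _).2

/-- The subspace `S = ℝⁿ` of the first layer `V₁ = ℍⁿ` of the quaternionic
Heisenberg Lie algebra `𝔥ⁿ_ℍ` is Ω-isotropic (`ω` vanishes on `S × S`),
Ω-regular (every ℝ-linear map `φ : S → Im ℍ` is of the form `ω(ξ, ·)|_S` for
some `ξ ∈ ℍⁿ`), and has dimension `n`. -/
theorem quaternionic_heisenberg_regular_isotropic (n : ℕ) :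
    (∀ z ∈ realVectors n, ∀ w ∈ realVectors n, omegaH n z w = 0) ∧
    (∀ φ : ↥(realVectors n) →ₗ[ℝ] ↥imH,
      ∃ ξ : Fin n → Quaternion ℝ,
        ∀ s : ↥(realVectors n), omegaH n ξ (s : Fin n → Quaternion ℝ)
          = (φ s : Quaternion ℝ)) ∧
    Module.finrank ℝ ↥(realVectors n) = n :=
  ⟨fun _ hz _ hw => omegaH_eq_zero_of_mem_realVectors hz hw,
    fun φ => ⟨regularWitness φ, omegaH_regularWitness φ⟩, finrank_realVectors n⟩
end

section
/- Let n ≥ 4, let 𝔫ₙ be the Lie algebra of strictly upper triangular real n×n matrices with bracket ⁅A, B⁆ = AB − BA, and let V₁ = span_ℝ{E_{i,i+1} : 1 ≤ i ≤ n−1} be the span of the superdiagonal elementary matrices. Let π : 𝔫ₙ → 𝔫ₙ/V₁ be the quotient map of vector spaces. Then there is no linear subspace S ⊆ V₁ with dim_ℝ S ≥ 2 such that both π(⁅s, s'⁆) = 0 for all s, s' ∈ S and the linear map Φ : V₁ → Hom_ℝ(S, 𝔫ₙ/V₁), Φ(ξ)(X) = π(⁅ξ, X⁆), is surjective. That is,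 𝔫ₙ has no Ω-regular, Ω-isotropic subspace of its first layer of dimension at least 2. -/
/-- The product of two strictly upper triangular matrices is strictly upper
triangular. -/
theorem strict_upper_mul {n : ℕ} (a b : Matrix (Fin n) (Fin n) ℝ)
    (ha : ∀ i j : Fin n, j ≤ i → a i j = 0)
    (hb : ∀ i j : Fin n, j ≤ i → b i j = 0) :
    ∀ i j : Fin n, j ≤ i → (a * b) i j = 0 := by
  intro i j hij
  rw [Matrix.mul_apply]
  refine Finset.sum_eq_zero fun k _ => ?_
  rcases le_or_gt k i with h | h
  · rw [ha i k h, zero_mul]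
  · rw [hb k j (hij.trans h.le), mul_zero]

attribute [local instance 100] LieRing.ofAssociativeRing

/-- The Lie algebra `𝔫ₙ` of strictly upper triangular real `n × n` matrices, as a
Lie subalgebra of the matrix algebra with `⁅A, B⁆ = AB − BA`. -/
def strictUpper (n : ℕ) : LieSubalgebra ℝ (Matrix (Fin n) (Fin n) ℝ) where
  carrier := {A | ∀ i j : Fin n, j ≤ i → A i j = 0}
  add_mem' := by
    intro a b ha hb i j hij
    simp [Matrix.add_apply, ha i j hij, hb i j hij]
  zero_mem' := by intro i j hij; simp
  smul_mem' := by
    intro c a ha i j hij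
    simp [Matrix.smul_apply, ha i j hij]
  lie_mem' := by
    intro a b ha hb i j hij
    show ⁅a, b⁆ i j = 0
    rw [Ring.lie_def]
    rw [Matrix.sub_apply, strict_upper_mul a b ha hb i j hij,
      strict_upper_mul b a hb ha i j hij, sub_zero]

/-- The first layer `V₁` of the natural grading of `𝔫ₙ`: the span of the
superdiagonal elementary matrices `E_{i,i+1}`. -/
def superDiagonalIn (n : ℕ) : Submodule ℝ ↥(strictUpper n) :=
  Submodule.span ℝ (Set.range fun i : Fin (n - 1) =>
    (⟨Matrix.single
        (⟨i.1, by have := i.2; omega⟩ : Fin n) ⟨i.1 + 1, by have := i.2; omega⟩ (1 : ℝ),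
      by
        intro a b hba
        rw [Matrix.single_apply_of_ne]
        rintro ⟨rfl, rfl⟩
        exact absurd hba (by simp [Fin.lt_def, Fin.le_def])⟩ : ↥(strictUpper n)))

/-!
Gromov's dimension count: if `Φ : V₁ → Hom(S, 𝔫ₙ/V₁)` is surjective then
`dim S · dim(𝔫ₙ/V₁) ≤ dim V₁ ≤ n - 1`. Reading off the second superdiagonal maps `𝔫ₙ/V₁`
onto `ℝⁿ⁻²`, so `dim S ≥ 2` would give `2(n - 2) ≤ n - 1`, i.e. `n ≤ 3`.
-/

section Gromov

variable {K L : Type*} [Field K] [LieRing L] [LieAlgebra K L]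

/-- The map `Φ` of Ω-regularity. -/
def bracketQuotientMap (V S : Submodule K L) : V →ₗ[K] S →ₗ[K] L ⧸ V :=
  LinearMap.mk₂ K (fun ξ X => V.mkQ ⁅(ξ : L), (X : L)⁆)
    (fun _ _ _ => by simp [add_lie]) (fun _ _ _ => by simp [smul_lie])
    (fun _ _ _ => by simp [lie_add]) (fun _ _ _ => by simp [lie_smul])

theorem finrank_mul_finrank_quotient_le [FiniteDimensional K L] {V S : Submodule K L}
    (hsurj : ∀ φ : S →ₗ[K] L ⧸ V, ∃ ξ ∈ V, ∀ X : S, φ X = V.mkQ ⁅ξ, (X : L)⁆) :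
    Module.finrank K S * Module.finrank K (L ⧸ V) ≤ Module.finrank K V := by
  have hΦ : Function.Surjective (bracketQuotientMap V S) := fun φ => by
    obtain ⟨ξ, hξ, hφ⟩ := hsurj φ
    exact ⟨⟨ξ, hξ⟩, LinearMap.ext fun X => (hφ X).symm⟩
  simpa [Module.finrank_linearMap] using LinearMap.finrank_le_finrank_of_surjective hΦ

end Gromov

theorem finrank_le_finrank_quotient_of_surjective {K M N : Type*} [Field K] [AddCommGroup M] [Module K M]
    [AddCommGroup N] [Module K N] [FiniteDimensional K M] {V : Submodule K M} {f : M →ₗ[K] N}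
    (hf : Function.Surjective f) (hV : V ≤ LinearMap.ker f) :
    Module.finrank K N ≤ Module.finrank K (M ⧸ V) := by
  refine LinearMap.finrank_le_finrank_of_surjective (f := V.liftQ f hV) fun y => ?_
  obtain ⟨x, rfl⟩ := hf y
  exact ⟨V.mkQ x, rfl⟩

theorem finrank_superDiagonalIn_le (n : ℕ) :
    Module.finrank ℝ (superDiagonalIn n) ≤ n - 1 :=
  (finrank_range_le_card _).trans_eq (Fintype.card_fin _)

def superdiagonal (n k : ℕ) : strictUpper n →ₗ[ℝ] (Fin (n - k) → ℝ) where
  toFun A i := (A : Matrix (Fin n) (Fin n) ℝ) ⟨i, by omega⟩ ⟨i + k, by omega⟩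
  map_add' _ _ := rfl
  map_smul' _ _ := rfl

theorem superdiagonal_surjective (n : ℕ) {k : ℕ} (hk : 1 ≤ k) :
    Function.Surjective (superdiagonal n k) := by
  intro v
  let A : Matrix (Fin n) (Fin n) ℝ :=
    Matrix.of fun a b => if h : (a : ℕ) + k = b then v ⟨a, by omega⟩ else 0
  have hA : A ∈ strictUpper n := fun a b hba => dif_neg (by rw [Fin.le_def] at hba; omega)
  exact ⟨⟨A, hA⟩, funext fun i => dif_pos rfl⟩

theorem superDiagonalIn_le_ker_superdiagonal (n : ℕ) {k : ℕ} (hk : k ≠ 1) :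
    superDiagonalIn n ≤ LinearMap.ker (superdiagonal n k) := by
  rw [superDiagonalIn, Submodule.span_le]
  rintro _ ⟨j, rfl⟩
  refine funext fun i => Matrix.single_apply_of_ne _ _ _ _ _ ?_
  simp only [Fin.ext_iff]
  omega

theorem sub_two_le_finrank_quotient_superDiagonalIn (n : ℕ) :
    n - 2 ≤ Module.finrank ℝ (strictUpper n ⧸ superDiagonalIn n) := by
  simpa using finrank_le_finrank_quotient_of_surjective (superdiagonal_surjective n one_le_two)
    (superDiagonalIn_le_ker_superdiagonal n (by norm_num : (2 : ℕ) ≠ 1))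

/-- For `n ≥ 4`, the Lie algebra `𝔫ₙ` of strictly upper triangular real `n × n`
matrices has no Ω-regular, Ω-isotropic subspace of its first layer `V₁` of
dimension at least `2`: there is no subspace `S ⊆ V₁` with `dim S ≥ 2` such that
all brackets of elements of `S` project to `0` in `𝔫ₙ/V₁` and the linear map
`Φ : V₁ → Hom_ℝ(S, 𝔫ₙ/V₁)`, `Φ(ξ)(X) = π(⁅ξ, X⁆)`, is surjective. -/
theorem no_regular_isotropic_in_strict_upper (n : ℕ) (hn : 4 ≤ n) :
    ¬ ∃ S : Submodule ℝ ↥(strictUpper n),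
        S ≤ superDiagonalIn n ∧
        2 ≤ Module.finrank ℝ ↥S ∧
        (∀ s s' : ↥S,
          Submodule.mkQ (superDiagonalIn n) ⁅(s : ↥(strictUpper n)), (s' : ↥(strictUpper n))⁆ = 0) ∧
        (∀ φ : ↥S →ₗ[ℝ] (↥(strictUpper n) ⧸ superDiagonalIn n),
          ∃ ξ ∈ superDiagonalIn n,
            ∀ X : ↥S, φ X = Submodule.mkQ (superDiagonalIn n) ⁅ξ, (X : ↥(strictUpper n))⁆) := by
  rintro ⟨S, -, hS, -, hsurj⟩
  have hgromov := finrank_mul_finrank_quotient_le hsurj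
  have hV := finrank_superDiagonalIn_le n
  have hQ := sub_two_le_finrank_quotient_superDiagonalIn n
  have hprod := Nat.mul_le_mul hS hQ
  omega
end
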